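/- arXiv:quant-ph/9911086 — 3 statements merged into one kernel-verified Lean document; each statement's English description precedes it below -/
import Mathlib

section
/- Let ψ¹_1,…,ψ¹_N and ψ²_1,…,ψ²_N be unit vectors in a finite-dimensional complex Hilbert space H with ⟨ψ²_{j'}, ψ²_j⟩ ≠ 0 for all j, j'. If there exist linear operators A_k on H with ∑_k A_k† A_k = 1 and complex scalars c_{jk} with A_k ψ¹_j = c_{jk} ψ²_j for all j, k, then the N×N matrix M with entries M_{j j'} = ⟨ψ¹_{j'}, ψ¹_j⟩ / ⟨ψ²_{j'}, ψ²_j⟩ is positive semidefinite. -/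
open scoped InnerProductSpace ComplexOrder Matrix

/-- The rank-one operator `|φ⟩⟨χ| : v ↦ ⟨χ, v⟩ φ`. -/
noncomputable def outer {H : Type*} [NormedAddCommGroup H] [InnerProductSpace ℂ H]
    (φ χ : H) : H →ₗ[ℂ] H where
  toFun v := ⟪χ, v⟫_ℂ • φ
  map_add' x y := by simp [inner_add_right, add_smul]
  map_smul' c x := by simp [inner_smul_right, smul_smul]

theorem stmt_1 {H : Type*} [NormedAddCommGroup H] [InnerProductSpace ℂ H]
    [FiniteDimensional ℂ H] {N m : ℕ} (ψ1 ψ2 : Fin N → H)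
    (h1 : ∀ j, ‖ψ1 j‖ = 1) (h2 : ∀ j, ‖ψ2 j‖ = 1)
    (hnz : ∀ j j', ⟪ψ2 j', ψ2 j⟫_ℂ ≠ 0)
    (A : Fin m → (H →ₗ[ℂ] H))
    (hA : ∑ k, LinearMap.adjoint (A k) ∘ₗ A k = LinearMap.id)
    (c : Fin N → Fin m → ℂ) (hc : ∀ j k, A k (ψ1 j) = c j k • ψ2 j) :
    (Matrix.of fun j j' : Fin N => ⟪ψ1 j', ψ1 j⟫_ℂ / ⟪ψ2 j', ψ2 j⟫_ℂ).PosSemidef := by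
  have key : ∀ j j' : Fin N,
      ⟪ψ1 j', ψ1 j⟫_ℂ = (∑ k, star (c j' k) * c j k) * ⟪ψ2 j', ψ2 j⟫_ℂ := by
    intro j j'
    have h0 : ψ1 j = ∑ k, LinearMap.adjoint (A k) (A k (ψ1 j)) := by
      have := congrArg (fun T : H →ₗ[ℂ] H => T (ψ1 j)) hA
      simpa using this.symm
    calc ⟪ψ1 j', ψ1 j⟫_ℂ = ⟪ψ1 j', ∑ k, LinearMap.adjoint (A k) (A k (ψ1 j))⟫_ℂ := by
          rw [← h0]
      _ = ∑ k, ⟪A k (ψ1 j'), A k (ψ1 j)⟫_ℂ := by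
          rw [inner_sum]
          refine Finset.sum_congr rfl fun k _ => ?_
          rw [LinearMap.adjoint_inner_right]
      _ = ∑ k, star (c j' k) * c j k * ⟪ψ2 j', ψ2 j⟫_ℂ := by
          refine Finset.sum_congr rfl fun k _ => ?_
          rw [hc, hc, inner_smul_left, inner_smul_right]
          ring_nf
          simp [RCLike.star_def, mul_comm, mul_assoc, mul_left_comm]
      _ = (∑ k, star (c j' k) * c j k) * ⟪ψ2 j', ψ2 j⟫_ℂ := by
          rw [Finset.sum_mul]
  set B : Matrix (Fin m) (Fin N) ℂ := Matrix.of fun k j => star (c j k) with hB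
  have hM : (Matrix.of fun j j' : Fin N => ⟪ψ1 j', ψ1 j⟫_ℂ / ⟪ψ2 j', ψ2 j⟫_ℂ)
      = Bᴴ * B := by
    ext j j'
    have : (Bᴴ * B) j j' = ∑ k, c j k * star (c j' k) := by
      simp [Matrix.mul_apply, hB, Matrix.conjTranspose_apply]
    rw [this]
    simp only [Matrix.of_apply]
    rw [key, mul_div_assoc, div_self (hnz j j'), mul_one]
    exact Finset.sum_congr rfl fun k _ => mul_comm _ _
  rw [hM]
  exact Matrix.posSemidef_conjTranspose_mul_self B
end

section
/- Let ψ¹_1,…,ψ¹_N and ψ²_1,…,ψ²_N be unit vectors in a finite-dimensional complex Hilbert space, with nonzero pairwise inner products ⟨ψ²_{j'}, ψ²_j⟩, and suppose there exist operators A_k with ∑_k A_k† A_k = 1 and A_k ψ¹_j = c_{jk} ψ²_j for scalars c_{jk}. Then |⟨ψ²_{j'}, ψ²_j⟩| ≥ |⟨ψ¹_{j'}, ψ¹_j⟩| for all j, j'. -/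
/-!
Since `∑ₖ Aₖ† Aₖ = 1`, every overlap splits as `⟪x, y⟫ = ∑ₖ ⟪Aₖ x, Aₖ y⟫`. With `Aₖ ψ¹ⱼ = cⱼₖ ψ²ⱼ`
this gives `⟪ψ¹ⱼ', ψ¹ⱼ⟫ = (∑ₖ conj cⱼ'ₖ cⱼₖ) ⟪ψ²ⱼ', ψ²ⱼ⟫`, and taking `j = j'` shows that each row
`cⱼ` is a unit vector of `ℂᵐ`. By Cauchy–Schwarz the scalar factor has modulus at most `1`.
-/

open scoped InnerProductSpace

open scoped ComplexConjugate
open Finset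

section Kraus

variable {𝕜 H ι : Type*} [RCLike 𝕜] [NormedAddCommGroup H] [InnerProductSpace 𝕜 H]
  [FiniteDimensional 𝕜 H] [Fintype ι] {A : ι → H →ₗ[𝕜] H}

theorem inner_eq_sum_inner_of_sum_adjoint_comp_self_eq_id
    (hA : ∑ k, LinearMap.adjoint (A k) ∘ₗ A k = LinearMap.id) (x y : H) :
    ⟪x, y⟫_𝕜 = ∑ k, ⟪A k x, A k y⟫_𝕜 := by
  conv_lhs => rw [← LinearMap.id_apply (R := 𝕜) y, ← hA]
  simp only [LinearMap.sum_apply, LinearMap.comp_apply, inner_sum,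
    LinearMap.adjoint_inner_right]

theorem sum_norm_sq_apply_eq_norm_sq_of_sum_adjoint_comp_self_eq_id
    (hA : ∑ k, LinearMap.adjoint (A k) ∘ₗ A k = LinearMap.id) (x : H) :
    ∑ k, ‖A k x‖ ^ 2 = ‖x‖ ^ 2 := by
  have h := inner_eq_sum_inner_of_sum_adjoint_comp_self_eq_id hA x x
  simp only [inner_self_eq_norm_sq_to_K] at h
  exact_mod_cast h.symm

end Kraus

theorem norm_sum_conj_mul_le {𝕜 ι : Type*} [RCLike 𝕜] (s : Finset ι) (a b : ι → 𝕜) :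
    ‖∑ i ∈ s, conj (a i) * b i‖ ≤ √(∑ i ∈ s, ‖a i‖ ^ 2) * √(∑ i ∈ s, ‖b i‖ ^ 2) :=
  (norm_sum_le _ _).trans <| by
    simpa only [norm_mul, RCLike.norm_conj] using
      Real.sum_mul_le_sqrt_mul_sqrt s (‖a ·‖) (‖b ·‖)

theorem stmt_4_general {H : Type*} [NormedAddCommGroup H] [InnerProductSpace ℂ H]
    [FiniteDimensional ℂ H] {N m : ℕ} (ψ1 ψ2 : Fin N → H)
    (h1 : ∀ j, ‖ψ1 j‖ = 1) (h2 : ∀ j, ‖ψ2 j‖ = 1)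
    (A : Fin m → (H →ₗ[ℂ] H))
    (hA : ∑ k, LinearMap.adjoint (A k) ∘ₗ A k = LinearMap.id)
    (c : Fin N → Fin m → ℂ) (hc : ∀ j k, A k (ψ1 j) = c j k • ψ2 j) :
    ∀ j j', ‖⟪ψ1 j', ψ1 j⟫_ℂ‖ ≤ ‖⟪ψ2 j', ψ2 j⟫_ℂ‖ := by
  intro j j'
  have hrow : ∀ j, ∑ k, ‖c j k‖ ^ 2 = 1 := fun j => by
    simpa [hc, norm_smul, h1, h2] using
      sum_norm_sq_apply_eq_norm_sq_of_sum_adjoint_comp_self_eq_id hA (ψ1 j)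
  have hinner : ⟪ψ1 j', ψ1 j⟫_ℂ = (∑ k, conj (c j' k) * c j k) * ⟪ψ2 j', ψ2 j⟫_ℂ := by
    simp only [inner_eq_sum_inner_of_sum_adjoint_comp_self_eq_id hA (ψ1 j'), hc,
      inner_smul_left, inner_smul_right, sum_mul, mul_assoc]
    exact sum_congr rfl fun k _ => mul_left_comm _ _ _
  calc ‖⟪ψ1 j', ψ1 j⟫_ℂ‖ = ‖∑ k, conj (c j' k) * c j k‖ * ‖⟪ψ2 j', ψ2 j⟫_ℂ‖ := by
        rw [hinner, norm_mul]
    _ ≤ 1 * ‖⟪ψ2 j', ψ2 j⟫_ℂ‖ := by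
        gcongr
        simpa [hrow] using norm_sum_conj_mul_le univ (c j') (c j)
    _ = ‖⟪ψ2 j', ψ2 j⟫_ℂ‖ := one_mul _

theorem stmt_4 {H : Type*} [NormedAddCommGroup H] [InnerProductSpace ℂ H]
    [FiniteDimensional ℂ H] {N m : ℕ} (ψ1 ψ2 : Fin N → H)
    (h1 : ∀ j, ‖ψ1 j‖ = 1) (h2 : ∀ j, ‖ψ2 j‖ = 1)
    (hnz : ∀ j j', ⟪ψ2 j', ψ2 j⟫_ℂ ≠ 0)
    (A : Fin m → (H →ₗ[ℂ] H))
    (hA : ∑ k, LinearMap.adjoint (A k) ∘ₗ A k = LinearMap.id)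
    (c : Fin N → Fin m → ℂ) (hc : ∀ j k, A k (ψ1 j) = c j k • ψ2 j) :
    ∀ j j', ‖⟪ψ1 j', ψ1 j⟫_ℂ‖ ≤ ‖⟪ψ2 j', ψ2 j⟫_ℂ‖ :=
  stmt_4_general ψ1 ψ2 h1 h2 A hA c hc
end

section
/- Let ψ¹_1,…,ψ¹_D be a linearly independent family spanning a D-dimensional complex Hilbert space H, and ψ²_1,…,ψ²_D unit vectors in H with all pairwise inner products ⟨ψ²_{j'}, ψ²_j⟩ nonzero. If the matrix M with M_{j j'} = ⟨ψ¹_{j'}, ψ¹_j⟩ / ⟨ψ²_{j'}, ψ²_j⟩ is positive semidefinite, then there exist linear operators A_1,…,A_D on H with ∑_k A_k† A_k = 1 and, for each j and k, A_k ψ¹_j is a scalar multiple of ψ²_j with ∑_k A_k |ψ¹_j⟩⟨ψ¹_j| A_k† = |ψ²_j⟩⟨ψ²_j|. -/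
/-!
Factor `M = Bᴴ B` and define `A_k` on the basis `ψ¹` by `A_k ψ¹_j = conj (B_kj) ψ²_j`.
Then `∑_k ⟨A_k ψ¹_i, A_k ψ¹_i'⟩ = M_i'i ⟨ψ²_i, ψ²_i'⟩ = ⟨ψ¹_i, ψ¹_i'⟩`, which is
`∑_k A_k† A_k = 1` tested on the basis, and `∑_k A_k |ψ¹_j⟩⟨ψ¹_j| A_k† = M_jj |ψ²_j⟩⟨ψ²_j|`
with `M_jj = 1` because the vectors are unit vectors.
-/

open scoped InnerProductSpace ComplexOrder Matrix

theorem Matrix.PosSemidef.exists_eq_conjTranspose_mul_self {n 𝕜 : Type*} [Fintype n]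
    [DecidableEq n] [RCLike 𝕜] {M : Matrix n n 𝕜} (hM : M.PosSemidef) :
    ∃ B : Matrix n n 𝕜, M = Bᴴ * B := by
  open scoped MatrixOrder in
  exact CStarAlgebra.nonneg_iff_eq_star_mul_self.mp hM.nonneg

theorem LinearMap.sum_adjoint_comp_self_eq_id_of_basis {𝕜 H ι κ : Type*} [RCLike 𝕜]
    [NormedAddCommGroup H] [InnerProductSpace 𝕜 H] [FiniteDimensional 𝕜 H] [Fintype κ]
    (b : Module.Basis ι 𝕜 H) (A : κ → H →ₗ[𝕜] H)
    (h : ∀ i i', ∑ k, ⟪A k (b i), A k (b i')⟫_𝕜 = ⟪b i, b i'⟫_𝕜) :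
    ∑ k, adjoint (A k) ∘ₗ A k = id :=
  b.ext fun i' => InnerProductSpace.ext_inner_left_basis b fun i => by
    simp [LinearMap.sum_apply, inner_sum, adjoint_inner_right, h]

section outer

variable {H : Type*} [NormedAddCommGroup H] [InnerProductSpace ℂ H]

@[simp] theorem outer_apply (φ χ v : H) : outer φ χ v = ⟪χ, v⟫_ℂ • φ := rfl

@[simp] theorem outer_smul_left (c : ℂ) (φ χ : H) : outer (c • φ) χ = c • outer φ χ := by
  ext v
  simp [smul_comm c]

@[simp] theorem outer_smul_right (c : ℂ) (φ χ : H) :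
    outer φ (c • χ) = starRingEnd ℂ c • outer φ χ := by
  ext v
  simp [smul_smul, mul_comm]

theorem comp_outer_comp_adjoint [FiniteDimensional ℂ H] (A B : H →ₗ[ℂ] H) (φ χ : H) :
    A ∘ₗ outer φ χ ∘ₗ LinearMap.adjoint B = outer (A φ) (B χ) := by
  ext v
  simp [LinearMap.adjoint_inner_right]

end outer

theorem stmt_5 {H : Type*} [NormedAddCommGroup H] [InnerProductSpace ℂ H]
    [FiniteDimensional ℂ H] {D : ℕ} (hD : Module.finrank ℂ H = D)
    (ψ1 ψ2 : Fin D → H)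
    (hli : LinearIndependent ℂ ψ1)
    (h1 : ∀ j, ‖ψ1 j‖ = 1) (h2 : ∀ j, ‖ψ2 j‖ = 1)
    (hnz : ∀ j j', ⟪ψ2 j', ψ2 j⟫_ℂ ≠ 0)
    (hM : (Matrix.of fun j j' : Fin D =>
        ⟪ψ1 j', ψ1 j⟫_ℂ / ⟪ψ2 j', ψ2 j⟫_ℂ).PosSemidef) :
    ∃ A : Fin D → (H →ₗ[ℂ] H),
      (∑ k, LinearMap.adjoint (A k) ∘ₗ A k = LinearMap.id) ∧
      (∀ j k, ∃ c : ℂ, A k (ψ1 j) = c • ψ2 j) ∧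
      (∀ j, ∑ k, (A k) ∘ₗ outer (ψ1 j) (ψ1 j) ∘ₗ LinearMap.adjoint (A k)
          = outer (ψ2 j) (ψ2 j)) := by
  let b : Module.Basis (Fin D) ℂ H := .mk hli
    (hli.span_eq_top_of_card_eq_finrank' (by simp [hD])).ge
  obtain ⟨B, hB⟩ := hM.exists_eq_conjTranspose_mul_self
  have hgram : ∀ i i', (Bᴴ * B) i' i * ⟪ψ2 i, ψ2 i'⟫_ℂ = ⟪ψ1 i, ψ1 i'⟫_ℂ := fun i i' => by
    rw [← hB, Matrix.of_apply, div_mul_cancel₀ _ (hnz i' i)]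
  have hdiag : ∀ j, (Bᴴ * B) j j = 1 := fun j => by
    simpa [inner_self_eq_norm_sq_to_K, h1, h2] using hgram j j
  let A : Fin D → H →ₗ[ℂ] H := fun k => b.constr ℂ fun j => star (B k j) • ψ2 j
  have hA : ∀ k j, A k (ψ1 j) = star (B k j) • ψ2 j := fun k j => by
    rw [← Module.Basis.mk_apply hli _ j]
    exact b.constr_basis ℂ _ j
  refine ⟨A, ?_, fun j k => ⟨_, hA k j⟩, fun j => ?_⟩
  · refine LinearMap.sum_adjoint_comp_self_eq_id_of_basis b A fun i i' => ?_
    simp only [b, Module.Basis.mk_apply, hA, inner_smul_left, inner_smul_right, ← hgram,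
      Matrix.mul_apply, Matrix.conjTranspose_apply, Finset.sum_mul]
    refine Finset.sum_congr rfl fun k _ => ?_
    simp only [RCLike.star_def, RCLike.conj_conj]
    ring
  · simp only [comp_outer_comp_adjoint, hA, outer_smul_left, outer_smul_right, smul_smul,
      ← Finset.sum_smul]
    convert one_smul ℂ (outer (ψ2 j) (ψ2 j))
    rw [← hdiag j, Matrix.mul_apply]
    simp [mul_comm]
end
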